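/- If P is rho-transient, then r(U|x,x) = 1/ρ for every x ∈ S. -/
import Mathlib


open scoped Classical ENNReal NNReal

variable {S : Type*}

/-- The `n`-step transition probabilities `P^n(x,y)` (n-th matrix power of `P`). -/
noncomputable def kpow (P : S → S → ℝ) : ℕ → S → S → ℝ
  | 0, x, y => if x = y then 1 else 0
  | n+1, x, y => ∑' w, P x w * kpow P n w y

/-- `P` is a transition probability: nonnegative entries and each row sums to `1`. -/
def IsTransProb (P : S → S → ℝ) : Prop :=
  (∀ x y, 0 ≤ P x y) ∧ ∀ x, HasSum (P x) 1

/-- `P` is irreducible: for all `x, y` there is `n ≥ 0` with `P^n(x,y) > 0`. -/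
def Irred (P : S → S → ℝ) : Prop :=
  ∀ x y, ∃ n, 0 < kpow P n x y

/-- The Green function `G(x,y|z) = ∑_{n ≥ 0} P^n(x,y) zⁿ`, a sum in `[0,∞]`. -/
noncomputable def green (P : S → S → ℝ) (x y : S) (z : ℝ) : ℝ≥0∞ :=
  ∑' n, ENNReal.ofReal (kpow P n x y * z ^ n)

/-- Radius of convergence of the power series with coefficients `a`,
as the supremum (in `[0,∞]`) of the nonnegative `z` at which the series converges. -/
noncomputable def convRadius (a : ℕ → ℝ) : ℝ≥0∞ :=
  ⨆ (z : ℝ≥0) (_ : Summable fun n => a n * (z : ℝ) ^ n), (z : ℝ≥0∞)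

/-- The spectral radius as an extended nonnegative real: the reciprocal of the
radius of convergence of `G(x,x|·)` (independent of `x` when `P` is irreducible). -/
noncomputable def specRadiusE (P : S → S → ℝ) : ℝ≥0∞ :=
  ⨆ x, (convRadius fun n => kpow P n x x)⁻¹

/-- The spectral radius `ρ` of `P`. -/
noncomputable def specRadius (P : S → S → ℝ) : ℝ :=
  (specRadiusE P).toReal

/-- The `(L,κ)`-lazy version `P^L_κ` of `P`:
`P^L_κ(x,y) = κ·1_{x=y} + (1-κ)P(x,y)` for `x ∈ L`, and `P^L_κ(x,y) = P(x,y)` for `x ∉ L`. -/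
noncomputable def lazy (P : S → S → ℝ) (L : Set S) (κ : ℝ) : S → S → ℝ :=
  fun x y => if x ∈ L then (if x = y then κ else 0) + (1 - κ) * P x y else P x y

/-- First-return probabilities: `u_0(x,y) = 0`, `u_1(x,y) = P(x,y)`, and
`u_n(x,y) = ∑_{w ≠ y} P(x,w) u_{n-1}(w,y)` for `n ≥ 2`. -/
noncomputable def fret (P : S → S → ℝ) : ℕ → S → S → ℝ
  | 0, _, _ => 0
  | 1, x, y => P x y
  | n+2, x, y => ∑' w, if w = y then 0 else P x w * fret P (n+1) w y

/-- The U-function `U(x,y|z) = ∑_{n ≥ 0} u_n(x,y) zⁿ`, a sum in `[0,∞]`. -/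
noncomputable def Ufun (P : S → S → ℝ) (x y : S) (z : ℝ) : ℝ≥0∞ :=
  ∑' n, ENNReal.ofReal (fret P n x y * z ^ n)

/-- `r(U|x,y)`, the radius of convergence of `U(x,y|·)`. -/
noncomputable def rU (P : S → S → ℝ) (x y : S) : ℝ≥0∞ :=
  convRadius fun n => fret P n x y

/-- `P` is rho-recurrent if `G(x,x|1/ρ) = ∞` (for all, equivalently some, `x`). -/
def RhoRecurrent (P : S → S → ℝ) : Prop :=
  ∀ x, green P x x (specRadius P)⁻¹ = ∞

/-- `P` is rho-transient if `G(x,x|1/ρ) < ∞` (for all, equivalently some, `x`). -/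
def RhoTransient (P : S → S → ℝ) : Prop :=
  ∀ x, green P x x (specRadius P)⁻¹ ≠ ∞

/-- A rho-recurrent `P` is strictly rho-recurrent if `r(U|x,x) > 1/ρ` for some `x`. -/
def StrictlyRhoRecurrent (P : S → S → ℝ) : Prop :=
  RhoRecurrent P ∧ ∃ x, ENNReal.ofReal (specRadius P)⁻¹ < rU P x x

/-- A rho-recurrent `P` is critically rho-recurrent if `r(U|x,x) = 1/ρ` for all `x`. -/
def CriticallyRhoRecurrent (P : S → S → ℝ) : Prop :=
  RhoRecurrent P ∧ ∀ x, rU P x x = ENNReal.ofReal (specRadius P)⁻¹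

set_option linter.unusedSectionVars false
section Aux
variable {S : Type*} [Countable S] {P : S → S → ℝ}

lemma kpow_nonneg (hP : IsTransProb P) : ∀ n x y, 0 ≤ kpow P n x y := by
  intro n
  induction n with
  | zero => intro x y; simp [kpow]; positivity
  | succ n ih => intro x y; exact tsum_nonneg fun w => mul_nonneg (hP.1 x w) (ih w y)

lemma kpow_le_one (hP : IsTransProb P) : ∀ n x y, kpow P n x y ≤ 1 := by
  intro n
  induction n with
  | zero => intro x y; simp [kpow]; split <;> norm_num
  | succ n ih =>
    intro x y
    have hsum : Summable fun w => P x w * kpow P n w y := by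
      apply Summable.of_nonneg_of_le (fun w => mul_nonneg (hP.1 x w) (kpow_nonneg hP n w y))
        (fun w => ?_) (hP.2 x).summable
      calc P x w * kpow P n w y ≤ P x w * 1 :=
            mul_le_mul_of_nonneg_left (ih w y) (hP.1 x w)
        _ = P x w := mul_one _
    calc kpow P (n+1) x y = ∑' w, P x w * kpow P n w y := by simp [kpow]
      _ ≤ ∑' w, P x w := Summable.tsum_le_tsum (fun w => by
            calc P x w * kpow P n w y ≤ P x w * 1 :=
                  mul_le_mul_of_nonneg_left (ih w y) (hP.1 x w)
              _ = P x w := mul_one _) hsum (hP.2 x).summable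
      _ = 1 := (hP.2 x).tsum_eq

lemma kpow_summable (hP : IsTransProb P) (n : ℕ) (x y : S) :
    Summable fun w => P x w * kpow P n w y :=
  Summable.of_nonneg_of_le (fun w => mul_nonneg (hP.1 x w) (kpow_nonneg hP n w y))
    (fun w => by
      calc P x w * kpow P n w y ≤ P x w * 1 :=
            mul_le_mul_of_nonneg_left (kpow_le_one hP n w y) (hP.1 x w)
        _ = P x w := mul_one _) (hP.2 x).summable

lemma fret_nonneg (hP : IsTransProb P) : ∀ n x y, 0 ≤ fret P n x y := by
  intro n
  induction n using Nat.strong_induction_on with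
  | _ n ih =>
    match n with
    | 0 => intro x y; simp [fret]
    | 1 => intro x y; simpa [fret] using hP.1 x y
    | (m+2) =>
      intro x y
      refine tsum_nonneg fun w => ?_
      by_cases h : w = y <;>
        simp [fret, h, mul_nonneg (hP.1 x w) (ih (m+1) (by omega) w y)]

lemma fret_le_kpow (hP : IsTransProb P) : ∀ n x y, fret P n x y ≤ kpow P n x y := by
  intro n
  induction n using Nat.strong_induction_on with
  | _ n ih =>
    match n with
    | 0 => intro x y; simp [fret, kpow]; split <;> norm_num
    | 1 =>
      intro x y
      have : kpow P 1 x y = P x y := by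
        rw [show kpow P 1 x y = ∑' w, P x w * kpow P 0 w y from by simp [kpow]]
        rw [tsum_eq_single y (fun w hw => by simp [kpow, hw])]
        simp [kpow]
      simp [fret, this]
    | (m+2) =>
      intro x y
      rw [show fret P (m+2) x y = ∑' w, if w = y then 0 else P x w * fret P (m+1) w y
           from by simp [fret]]
      rw [show kpow P (m+2) x y = ∑' w, P x w * kpow P (m+1) w y from by simp [kpow]]
      refine Summable.tsum_le_tsum (fun w => ?_) ?_ (kpow_summable hP (m+1) x y)
      · by_cases h : w = y
        · simp [h, mul_nonneg (hP.1 x y) (kpow_nonneg hP (m+1) y y)]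
        · simp only [h, if_false]
          exact mul_le_mul_of_nonneg_left (ih (m+1) (by omega) w y) (hP.1 x w)
      · apply Summable.of_nonneg_of_le (fun w => ?_) (fun w => ?_)
          (kpow_summable hP (m+1) x y)
        · by_cases h : w = y <;>
            simp [h, mul_nonneg (hP.1 x w) (fret_nonneg hP (m+1) w y)]
        · by_cases h : w = y
          · simp [h, mul_nonneg (hP.1 x y) (kpow_nonneg hP (m+1) y y)]
          · simp only [h, if_false]
            exact mul_le_mul_of_nonneg_left (ih (m+1) (by omega) w y) (hP.1 x w)

end Aux
section Aux2
variable {S : Type*} [Countable S] {P : S → S → ℝ}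
open Finset

lemma kpow_one (hP : IsTransProb P) (x y : S) : kpow P 1 x y = P x y := by
  rw [show kpow P 1 x y = ∑' w, P x w * kpow P 0 w y from by simp [kpow]]
  rw [tsum_eq_single y (fun w hw => by simp [kpow, hw])]
  simp [kpow]

lemma fret_term_summable (hP : IsTransProb P) (m : ℕ) (x y : S) :
    Summable fun w => if w = y then 0 else P x w * fret P (m+1) w y := by
  apply Summable.of_nonneg_of_le (fun w => ?_) (fun w => ?_) (hP.2 x).summable
  · by_cases h : w = y <;>
      simp [h, mul_nonneg (hP.1 x w) (fret_nonneg hP (m+1) w y)]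
  · by_cases h : w = y
    · simp [h, hP.1 x y]
    · simp only [h, if_false]
      calc P x w * fret P (m+1) w y ≤ P x w * 1 := by
            exact mul_le_mul_of_nonneg_left
              ((fret_le_kpow hP (m+1) w y).trans (kpow_le_one hP (m+1) w y)) (hP.1 x w)
        _ = P x w := mul_one _

lemma renewal (hP : IsTransProb P) (y : S) :
    ∀ n x, kpow P (n+1) x y
      = ∑ m ∈ Finset.range (n+1), fret P (m+1) x y * kpow P (n-m) y y := by
  intro n
  induction n with
  | zero =>
    intro x
    rw [kpow_one hP, Finset.sum_range_one,
      show fret P (0+1) x y = P x y from rfl]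
    simp [kpow]
  | succ n ih =>
    intro x
    have key : ∀ w, P x w * kpow P (n+1) w y =
        (if w = y then P x y * kpow P (n+1) y y else 0) +
        ∑ m ∈ Finset.range (n+1),
          (if w = y then 0 else P x w * fret P (m+1) w y) * kpow P (n-m) y y := by
      intro w
      by_cases h : w = y
      · subst h; simp
      · simp only [h, if_false, zero_add, ih w, Finset.mul_sum, mul_assoc]
    rw [show kpow P (n+2) x y = ∑' w, P x w * kpow P (n+1) w y from by simp [kpow]]
    have hs1 : Summable fun w => if w = y then P x y * kpow P (n+1) y y else 0 :=
      (hasSum_ite_eq y _).summable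
    have hs2 : ∀ m ∈ Finset.range (n+1), Summable fun w =>
        (if w = y then 0 else P x w * fret P (m+1) w y) * kpow P (n-m) y y :=
      fun m _ => (fret_term_summable hP m x y).mul_right _
    have hs2' : Summable fun w => ∑ m ∈ Finset.range (n+1),
        (if w = y then 0 else P x w * fret P (m+1) w y) * kpow P (n-m) y y :=
      summable_sum hs2
    calc (∑' w, P x w * kpow P (n+1) w y)
        = (∑' w, if w = y then P x y * kpow P (n+1) y y else 0)
          + ∑' w, ∑ m ∈ Finset.range (n+1),
            (if w = y then 0 else P x w * fret P (m+1) w y) * kpow P (n-m) y y := by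
          rw [← Summable.tsum_add hs1 hs2']
          exact tsum_congr key
      _ = P x y * kpow P (n+1) y y
          + ∑ m ∈ Finset.range (n+1), fret P (m+2) x y * kpow P (n-m) y y := by
          rw [tsum_ite_eq y, Summable.tsum_finsetSum hs2]
          congr 1
          refine Finset.sum_congr rfl fun m _ => ?_
          rw [(fret_term_summable hP m x y).tsum_mul_right,
            show fret P (m+2) x y
              = ∑' w, if w = y then 0 else P x w * fret P (m+1) w y from by simp [fret]]
      _ = ∑ m ∈ Finset.range (n+2), fret P (m+1) x y * kpow P (n+1-m) y y := by
          rw [Finset.sum_range_succ' (fun m => fret P (m+1) x y * kpow P (n+1-m) y y) (n+1)]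
          simp only [Nat.succ_sub_succ_eq_sub, Nat.sub_zero]
          rw [show fret P (0+1) x y = P x y from rfl, add_comm]

end Aux2
section Aux3
variable {S : Type*} [Countable S] {P : S → S → ℝ}
open Filter

lemma kpow_mul_le (hP : IsTransProb P) :
    ∀ a b (x w z : S), kpow P a x w * kpow P b w z ≤ kpow P (a+b) x z := by
  intro a
  induction a with
  | zero =>
    intro b x w z
    by_cases h : x = w
    · subst h; simp [kpow]
    · simp [kpow, h, kpow_nonneg hP b x z]
  | succ a ih =>
    intro b x w z
    have harr : a + 1 + b = (a + b) + 1 := by omega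
    rw [harr]
    rw [show kpow P ((a+b)+1) x z = ∑' v, P x v * kpow P (a+b) v z from by simp [kpow]]
    have hL : kpow P (a+1) x w * kpow P b w z
        = ∑' v, (P x v * kpow P a v w) * kpow P b w z := by
      rw [(kpow_summable hP a x w).tsum_mul_right,
        show kpow P (a+1) x w = ∑' v, P x v * kpow P a v w from by simp [kpow]]
    rw [hL]
    refine Summable.tsum_le_tsum (fun v => ?_) ((kpow_summable hP a x w).mul_right _)
      (kpow_summable hP (a+b) x z)
    rw [mul_assoc]
    exact mul_le_mul_of_nonneg_left (ih b v w z) (hP.1 x v)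

lemma le_convRadius {a : ℕ → ℝ} {z : ℝ≥0} (h : Summable fun n => a n * (z : ℝ) ^ n) :
    (z : ℝ≥0∞) ≤ convRadius a :=
  le_iSup₂ (f := fun (z : ℝ≥0) (_ : Summable fun n => a n * (z : ℝ) ^ n) => (z : ℝ≥0∞)) z h

lemma convRadius_le {a : ℕ → ℝ} {B : ℝ≥0∞}
    (h : ∀ z : ℝ≥0, (Summable fun n => a n * (z : ℝ) ^ n) → (z : ℝ≥0∞) ≤ B) :
    convRadius a ≤ B :=
  iSup₂_le h

lemma summable_kpow_of_lt_one (hP : IsTransProb P) (x y : S) {z : ℝ} (h0 : 0 ≤ z)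
    (h1 : z < 1) : Summable fun n => kpow P n x y * z ^ n := by
  refine Summable.of_nonneg_of_le
    (fun n => mul_nonneg (kpow_nonneg hP n x y) (pow_nonneg h0 n)) (fun n => ?_)
    (summable_geometric_of_lt_one h0 h1)
  calc kpow P n x y * z ^ n ≤ 1 * z ^ n :=
        mul_le_mul_of_nonneg_right (kpow_le_one hP n x y) (pow_nonneg h0 n)
    _ = z ^ n := one_mul _

lemma one_le_convRadius (hP : IsTransProb P) (x y : S) :
    1 ≤ convRadius fun n => kpow P n x y := by
  by_contra h
  push_neg at h
  obtain ⟨z, hz1, hz2⟩ := ENNReal.lt_iff_exists_nnreal_btwn.mp h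
  exact absurd (le_convRadius (summable_kpow_of_lt_one hP x y z.coe_nonneg
    (by exact_mod_cast hz2))) (not_le.mpr hz1)

lemma convRadius_kpow_le (hP : IsTransProb P) {x : S} {d : ℕ} (hd : 1 ≤ d) {δ : ℝ}
    (hδ : 0 < δ) (hdk : ∀ k, δ ^ k ≤ kpow P (d * k) x x) :
    convRadius (fun n => kpow P n x x) ≤ ENNReal.ofReal (max 1 δ⁻¹) := by
  refine convRadius_le fun z hz => ?_
  rw [← ENNReal.ofReal_coe_nnreal]
  refine ENNReal.ofReal_le_ofReal ?_
  -- claim : (z:ℝ) ≤ max 1 δ⁻¹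
  by_cases hz1 : (z : ℝ) ≤ 1
  · exact hz1.trans (le_max_left _ _)
  push_neg at hz1
  refine le_trans ?_ (le_max_right 1 δ⁻¹)
  -- show z ≤ δ⁻¹ ; suffices δ * z ^ d ≤ 1 is false unless... show δ * z^d ≤ 1 fails;
  have hzd : δ * (z : ℝ) ^ d ≤ 1 := by
    by_contra hq
    push_neg at hq
    have htend : Tendsto (fun k => kpow P (d * k) x x * (z : ℝ) ^ (d * k)) atTop (nhds 0) := by
      have h1 : Tendsto (fun n => kpow P n x x * (z : ℝ) ^ n) atTop (nhds 0) :=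
        hz.tendsto_atTop_zero
      exact h1.comp (tendsto_atTop_mono (fun k => Nat.le_mul_of_pos_left k (by omega))
        tendsto_id)
    have hge : ∀ k, (1 : ℝ) ≤ kpow P (d * k) x x * (z : ℝ) ^ (d * k) := by
      intro k
      calc (1:ℝ) ≤ (δ * (z:ℝ)^d) ^ k := one_le_pow₀ hq.le
        _ = δ ^ k * ((z:ℝ)^d) ^ k := mul_pow _ _ _
        _ = δ ^ k * (z:ℝ) ^ (d * k) := by rw [← pow_mul]
        _ ≤ kpow P (d * k) x x * (z:ℝ) ^ (d * k) :=
            mul_le_mul_of_nonneg_right (hdk k) (pow_nonneg z.coe_nonneg _)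
    have : (1:ℝ) ≤ 0 := ge_of_tendsto htend (Eventually.of_forall hge)
    linarith
  have hzz : (z : ℝ) ≤ (z : ℝ) ^ d := le_self_pow₀ hz1.le (by omega)
  have : (z : ℝ) ^ d ≤ δ⁻¹ := by
    rw [← one_div, le_div_iff₀ hδ]
    linarith
  linarith

end Aux3
section Aux4
variable {S : Type*} [Countable S] {P : S → S → ℝ}
open Filter

lemma exists_pos_return (hP : IsTransProb P) (hirr : Irred P) [Infinite S] (x : S) :
    ∃ d, 1 ≤ d ∧ 0 < kpow P d x x := by
  obtain ⟨y, hy⟩ := exists_ne x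
  obtain ⟨n, hn⟩ := hirr x y
  obtain ⟨m, hm⟩ := hirr y x
  have hn0 : n ≠ 0 := by
    rintro rfl; simp [kpow, (Ne.symm hy)] at hn
  refine ⟨n + m, by omega, ?_⟩
  calc (0:ℝ) < kpow P n x y * kpow P m y x := mul_pos hn hm
    _ ≤ kpow P (n+m) x x := kpow_mul_le hP n m x y x

lemma kpow_pow_le (hP : IsTransProb P) {x : S} {d : ℕ} {δ : ℝ} (h0 : 0 ≤ δ)
    (hδ : δ ≤ kpow P d x x) : ∀ k, δ ^ k ≤ kpow P (d * k) x x := by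
  intro k
  induction k with
  | zero => simp [kpow]
  | succ k ih =>
    calc δ ^ (k+1) = δ ^ k * δ := by ring
      _ ≤ kpow P (d*k) x x * kpow P d x x := by
          apply mul_le_mul ih hδ h0 (kpow_nonneg hP _ x x)
      _ ≤ kpow P (d*k + d) x x := kpow_mul_le hP _ _ x x x
      _ = kpow P (d*(k+1)) x x := by ring_nf

lemma summable_kpow_shift (hP : IsTransProb P) (hirr : Irred P) (x y : S) {z : ℝ≥0}
    (hz : Summable fun n => kpow P n x x * (z : ℝ) ^ n) :
    Summable fun n => kpow P n y y * (z : ℝ) ^ n := by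
  rcases eq_or_lt_of_le z.coe_nonneg with h0 | h0
  · apply (summable_nat_add_iff 1).mp
    have : ∀ n : ℕ, kpow P (n+1) y y * (z:ℝ)^(n+1) = 0 := by
      intro n; rw [← h0]; simp
    simpa [this] using summable_zero
  obtain ⟨k, hk⟩ := hirr x y
  obtain ⟨l, hl⟩ := hirr y x
  have hE : 0 < kpow P k x y * kpow P l y x * (z:ℝ)^(k+l) :=
    mul_pos (mul_pos hk hl) (pow_pos h0 _)
  set E := kpow P k x y * kpow P l y x * (z:ℝ)^(k+l) with hEdef
  have hsum2 : Summable fun n =>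
      (kpow P (n+(k+l)) x x * (z:ℝ)^(n+(k+l))) / E :=
    ((summable_nat_add_iff (k+l)).mpr hz).div_const E
  refine Summable.of_nonneg_of_le
    (fun n => mul_nonneg (kpow_nonneg hP n y y) (pow_nonneg z.coe_nonneg n))
    (fun n => ?_) hsum2
  rw [le_div_iff₀ hE]
  have h1 : kpow P n y y * kpow P l y x ≤ kpow P (n+l) y x := kpow_mul_le hP n l y y x
  have h3 : kpow P k x y * (kpow P n y y * kpow P l y x) ≤ kpow P (k+(n+l)) x x :=
    le_trans (mul_le_mul_of_nonneg_left h1 hk.le) (kpow_mul_le hP k (n+l) x y x)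
  calc kpow P n y y * (z:ℝ)^n * E
      = (kpow P k x y * (kpow P n y y * kpow P l y x)) * ((z:ℝ)^n * (z:ℝ)^(k+l)) := by
        rw [hEdef]; ring
    _ ≤ kpow P (k+(n+l)) x x * ((z:ℝ)^n * (z:ℝ)^(k+l)) :=
        mul_le_mul_of_nonneg_right h3 (by positivity)
    _ = kpow P (n+(k+l)) x x * (z:ℝ)^(n+(k+l)) := by
        rw [show k+(n+l) = n+(k+l) from by omega]; ring

lemma convRadius_kpow_indep (hP : IsTransProb P) (hirr : Irred P) (x y : S) :
    convRadius (fun n => kpow P n x x) = convRadius (fun n => kpow P n y y) :=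
  le_antisymm
    (convRadius_le fun z hz => le_convRadius (summable_kpow_shift hP hirr x y hz))
    (convRadius_le fun z hz => le_convRadius (summable_kpow_shift hP hirr y x hz))

lemma convRadius_kpow_lt_top (hP : IsTransProb P) (hirr : Irred P) [Infinite S] (x : S) :
    convRadius (fun n => kpow P n x x) < ⊤ := by
  obtain ⟨d, hd1, hd⟩ := exists_pos_return hP hirr x
  exact lt_of_le_of_lt
    (convRadius_kpow_le hP hd1 hd (kpow_pow_le hP hd.le le_rfl))
    ENNReal.ofReal_lt_top

lemma specRadiusE_eq (hP : IsTransProb P) (hirr : Irred P) [Infinite S] (x : S) :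
    specRadiusE P = (convRadius fun n => kpow P n x x)⁻¹ := by
  have : ∀ x' : S, (convRadius fun n => kpow P n x' x')⁻¹
      = (convRadius fun n => kpow P n x x)⁻¹ :=
    fun x' => by rw [convRadius_kpow_indep hP hirr x' x]
  rw [specRadiusE]
  simp only [this]
  exact iSup_const

lemma inv_specRadius_eq (hP : IsTransProb P) (hirr : Irred P) [Infinite S] (x : S) :
    (specRadius P)⁻¹ = (convRadius fun n => kpow P n x x).toReal ∧
    ENNReal.ofReal (specRadius P)⁻¹ = convRadius fun n => kpow P n x x := by
  set c := convRadius fun n => kpow P n x x with hc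
  have hc1 : 1 ≤ c := one_le_convRadius hP x x
  have hctop : c < ⊤ := convRadius_kpow_lt_top hP hirr x
  have hcpos : (0:ℝ) < c.toReal := ENNReal.toReal_pos (by intro h; rw [h] at hc1; simp at hc1)
    hctop.ne
  have h1 : specRadius P = (c.toReal)⁻¹ := by
    rw [specRadius, specRadiusE_eq hP hirr x, ← hc, ENNReal.toReal_inv]
  constructor
  · rw [h1, inv_inv]
  · rw [h1, inv_inv, ENNReal.ofReal_toReal hctop.ne]

end Aux4
section Aux5
open Finset

lemma sum_mul_sum_le_conv (f g : ℕ → ℝ) (hf : ∀ m, 0 ≤ f m) (hg : ∀ k, 0 ≤ g k) (M : ℕ) :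
    (∑ m ∈ range M, f m) * (∑ k ∈ range M, g k)
      ≤ ∑ n ∈ range (2*M), ∑ m ∈ range (n+1), f m * g (n-m) := by
  rw [Finset.sum_mul_sum, ← Finset.sum_product']
  rw [Finset.sum_sigma']
  have hinj : ∀ p ∈ range M ×ˢ range M, ∀ p' ∈ range M ×ˢ range M,
      (⟨p.1 + p.2, p.1⟩ : Σ _ : ℕ, ℕ) = ⟨p'.1 + p'.2, p'.1⟩ → p = p' := by
    rintro ⟨a, b⟩ _ ⟨a', b'⟩ _ h
    simp only [Sigma.mk.inj_iff, heq_eq_eq] at h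
    have : a = a' := h.2
    subst this
    have : b = b' := by omega
    subst this; rfl
  have himg := Finset.sum_image (s := range M ×ˢ range M)
    (f := fun q : Σ _ : ℕ, ℕ => f q.2 * g (q.1 - q.2))
    (g := fun p : ℕ × ℕ => (⟨p.1 + p.2, p.1⟩ : Σ _ : ℕ, ℕ)) hinj
  have heq : ∑ p ∈ range M ×ˢ range M, f p.1 * g p.2
      = ∑ q ∈ (range M ×ˢ range M).image
          (fun p : ℕ × ℕ => (⟨p.1 + p.2, p.1⟩ : Σ _ : ℕ, ℕ)), f q.2 * g (q.1 - q.2) := by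
    rw [himg]
    exact Finset.sum_congr rfl fun p hp => by simp
  rw [heq]
  refine Finset.sum_le_sum_of_subset_of_nonneg ?_ (fun q _ _ => mul_nonneg (hf _) (hg _))
  intro q hq
  simp only [Finset.mem_image, Finset.mem_product, Finset.mem_range] at hq
  obtain ⟨p, ⟨h1, h2⟩, rfl⟩ := hq
  simp only [Finset.mem_sigma, Finset.mem_range]
  omega

lemma conv_le_sum_mul_sum (f g : ℕ → ℝ) (hf : ∀ m, 0 ≤ f m) (hg : ∀ k, 0 ≤ g k) (N : ℕ) :
    ∑ n ∈ range N, ∑ m ∈ range (n+1), f m * g (n-m)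
      ≤ (∑ m ∈ range N, f m) * (∑ k ∈ range N, g k) := by
  rw [Finset.sum_mul_sum, ← Finset.sum_product']
  rw [Finset.sum_sigma']
  have hinj : ∀ q ∈ (range N).sigma (fun n => range (n+1)),
      ∀ q' ∈ (range N).sigma (fun n => range (n+1)),
      (q.2, q.1 - q.2) = (q'.2, q'.1 - q'.2) → q = q' := by
    rintro ⟨a, b⟩ hq ⟨a', b'⟩ hq' h
    simp only [Finset.mem_sigma, Finset.mem_range] at hq hq'
    simp only [Prod.mk.injEq] at h
    obtain ⟨h1, h2⟩ := h
    subst h1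
    have : a = a' := by omega
    subst this; rfl
  have himg := Finset.sum_image (s := (range N).sigma (fun n => range (n+1)))
    (f := fun p : ℕ × ℕ => f p.1 * g p.2)
    (g := fun q : Σ _ : ℕ, ℕ => ((q.2, q.1 - q.2) : ℕ × ℕ)) hinj
  have heq : ∑ q ∈ (range N).sigma (fun n => range (n+1)), f q.2 * g (q.1 - q.2)
      = ∑ p ∈ ((range N).sigma (fun n => range (n+1))).image
          (fun q : Σ _ : ℕ, ℕ => ((q.2, q.1 - q.2) : ℕ × ℕ)), f p.1 * g p.2 := by
    rw [himg]
  rw [heq]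
  refine Finset.sum_le_sum_of_subset_of_nonneg ?_ (fun p _ _ => mul_nonneg (hf _) (hg _))
  intro p hp
  simp only [Finset.mem_image, Finset.mem_sigma, Finset.mem_range] at hp
  obtain ⟨q, ⟨h1, h2⟩, rfl⟩ := hp
  simp only [Finset.mem_product, Finset.mem_range]
  omega

end Aux5
section Aux6
variable {S : Type*} [Countable S] {P : S → S → ℝ}
open Finset Filter

lemma summable_of_green_ne_top (hP : IsTransProb P) {x : S} {r : ℝ} (hr : 0 ≤ r)
    (h : green P x x r ≠ ⊤) : Summable fun n => kpow P n x x * r ^ n := by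
  have hnn : ∀ n, 0 ≤ kpow P n x x * r ^ n :=
    fun n => mul_nonneg (kpow_nonneg hP n x x) (pow_nonneg hr n)
  rw [green] at h
  have h2 : (∑' n, ((kpow P n x x * r ^ n).toNNReal : ℝ≥0∞)) ≠ ⊤ := h
  have h3 := ENNReal.tsum_coe_ne_top_iff_summable.mp h2
  have h4 := NNReal.summable_coe.mpr h3
  refine h4.congr fun n => ?_
  exact Real.coe_toNNReal _ (hnn n)

lemma renewal_pow (hP : IsTransProb P) (x : S) (r : ℝ) (n : ℕ) :
    ∑ m ∈ range (n+1), (fret P (m+1) x x * r^(m+1)) * (kpow P (n-m) x x * r^(n-m))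
      = kpow P (n+1) x x * r^(n+1) := by
  rw [renewal hP x n x, Finset.sum_mul]
  refine Finset.sum_congr rfl fun m hm => ?_
  have hmn : m ≤ n := by simpa using Nat.lt_succ_iff.mp (Finset.mem_range.mp hm)
  have : r^(m+1) * r^(n-m) = r^(n+1) := by
    rw [← pow_add]
    congr 1
    omega
  calc (fret P (m+1) x x * r^(m+1)) * (kpow P (n-m) x x * r^(n-m))
      = fret P (m+1) x x * kpow P (n-m) x x * (r^(m+1) * r^(n-m)) := by ring
    _ = fret P (m+1) x x * kpow P (n-m) x x * r^(n+1) := by rw [this]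

end Aux6
section Aux7
variable {S : Type*} [Countable S] {P : S → S → ℝ}
open Finset Filter Topology

lemma summable_fret_of_summable_kpow (hP : IsTransProb P) (x : S) {r : ℝ} (hr : 0 ≤ r)
    (hG : Summable fun n => kpow P n x x * r ^ n) :
    Summable fun n => fret P n x x * r ^ n := by
  refine Summable.of_nonneg_of_le
    (fun n => mul_nonneg (fret_nonneg hP n x x) (pow_nonneg hr n)) (fun n => ?_) hG
  exact mul_le_mul_of_nonneg_right (fret_le_kpow hP n x x) (pow_nonneg hr n)

lemma U_lt_one (hP : IsTransProb P) (x : S) {r : ℝ} (hr : 0 ≤ r)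
    (hG : Summable fun n => kpow P n x x * r ^ n) :
    (∑' n, fret P n x x * r ^ n) < 1 := by
  set a : ℕ → ℝ := fun n => fret P n x x * r^n with ha
  set b : ℕ → ℝ := fun n => kpow P n x x * r^n with hb
  have hbnn : ∀ n, 0 ≤ b n := fun n => mul_nonneg (kpow_nonneg hP n x x) (pow_nonneg hr n)
  have hann : ∀ n, 0 ≤ a n := fun n => mul_nonneg (fret_nonneg hP n x x) (pow_nonneg hr n)
  have hU : Summable a := summable_fret_of_summable_kpow hP x hr hG
  set g := ∑' n, b n with hg
  have hb0 : b 0 = 1 := by simp [hb, kpow]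
  have hg1 : (1:ℝ) ≤ g := by
    have := Summable.le_tsum hG 0 (fun i _ => hbnn i)
    rw [hb0] at this; exact this
  have hU1 : Summable fun m => a (m+1) := (summable_nat_add_iff 1).mpr hU
  have key : ∀ M, 1 + (∑ m ∈ range M, a (m+1)) * (∑ k ∈ range M, b k) ≤ g := by
    intro M
    have h1 : (∑ m ∈ range M, a (m+1)) * (∑ k ∈ range M, b k)
        ≤ ∑ n ∈ range (2*M), ∑ m ∈ range (n+1), a (m+1) * b (n-m) :=
      sum_mul_sum_le_conv _ _ (fun m => hann _) hbnn M
    have h2 : ∀ n, (∑ m ∈ range (n+1), a (m+1) * b (n-m)) = b (n+1) :=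
      fun n => renewal_pow hP x r n
    calc 1 + (∑ m ∈ range M, a (m+1)) * (∑ k ∈ range M, b k)
        ≤ 1 + ∑ n ∈ range (2*M), b (n+1) := by
          rw [show (∑ n ∈ range (2*M), b (n+1))
            = ∑ n ∈ range (2*M), ∑ m ∈ range (n+1), a (m+1) * b (n-m)
            from (Finset.sum_congr rfl fun n _ => (h2 n).symm)]
          linarith
      _ = ∑ n ∈ range (2*M+1), b n := by
          rw [Finset.sum_range_succ' b (2*M), hb0]; ring
      _ ≤ g := Summable.sum_le_tsum _ (fun i _ => hbnn i) hG
  have hshift : (∑' m, a (m+1)) = ∑' n, a n := by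
    rw [Summable.tsum_eq_zero_add hU, show a 0 = 0 from by simp [ha, fret], zero_add]
  have htend : Tendsto (fun M => 1 + (∑ m ∈ range M, a (m+1)) * (∑ k ∈ range M, b k))
      atTop (𝓝 (1 + (∑' m, a (m+1)) * g)) :=
    tendsto_const_nhds.add ((hU1.hasSum.tendsto_sum_nat).mul (hG.hasSum.tendsto_sum_nat))
  have hfin : 1 + (∑' n, a n) * g ≤ g := by
    have := le_of_tendsto htend (Eventually.of_forall key)
    rwa [hshift] at this
  by_contra hge
  push_neg at hge
  have : g ≤ (∑' n, a n) * g := le_mul_of_one_le_left (by linarith) hge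
  linarith

lemma summable_kpow_of_U_lt_one (hP : IsTransProb P) (x : S) {t : ℝ} (ht : 0 ≤ t)
    (hUs : Summable fun n => fret P n x x * t ^ n)
    (hU1 : (∑' n, fret P n x x * t ^ n) < 1) :
    Summable fun n => kpow P n x x * t ^ n := by
  set a : ℕ → ℝ := fun n => fret P n x x * t^n with ha
  set b : ℕ → ℝ := fun n => kpow P n x x * t^n with hb
  have hbnn : ∀ n, 0 ≤ b n := fun n => mul_nonneg (kpow_nonneg hP n x x) (pow_nonneg ht n)
  have hann : ∀ n, 0 ≤ a n := fun n => mul_nonneg (fret_nonneg hP n x x) (pow_nonneg ht n)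
  set U := ∑' n, a n with hUdef
  have hUnn : 0 ≤ U := tsum_nonneg hann
  have hC : 0 < 1 - U := by linarith
  have hb0 : b 0 = 1 := by simp [hb, kpow]
  have hpart : ∀ N, (∑ m ∈ range N, a (m+1)) ≤ U := by
    intro N
    have h1 : (∑ m ∈ range N, a (m+1)) = ∑ m ∈ range (N+1), a m := by
      rw [Finset.sum_range_succ' a N, show a 0 = 0 from by simp [ha, fret], add_zero]
    rw [h1]
    exact Summable.sum_le_tsum _ (fun i _ => hann i) hUs
  have hSGnn : ∀ N, 0 ≤ ∑ k ∈ range N, b k :=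
    fun N => Finset.sum_nonneg fun k _ => hbnn k
  have hstep : ∀ N, (∑ k ∈ range (N+1), b k) ≤ 1 + U * ∑ k ∈ range N, b k := by
    intro N
    have h1 : (∑ k ∈ range (N+1), b k) = 1 + ∑ n ∈ range N, b (n+1) := by
      rw [Finset.sum_range_succ' b N, hb0]; ring
    have h2 : (∑ n ∈ range N, b (n+1))
        = ∑ n ∈ range N, ∑ m ∈ range (n+1), a (m+1) * b (n-m) :=
      Finset.sum_congr rfl fun n _ => (renewal_pow hP x t n).symm
    have h3 : (∑ n ∈ range N, ∑ m ∈ range (n+1), a (m+1) * b (n-m))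
        ≤ (∑ m ∈ range N, a (m+1)) * (∑ k ∈ range N, b k) :=
      conv_le_sum_mul_sum _ _ (fun m => hann _) hbnn N
    have h4 : (∑ m ∈ range N, a (m+1)) * (∑ k ∈ range N, b k) ≤ U * ∑ k ∈ range N, b k :=
      mul_le_mul_of_nonneg_right (hpart N) (hSGnn N)
    rw [h1, h2]
    linarith
  have hbound : ∀ N, (∑ k ∈ range N, b k) ≤ (1-U)⁻¹ := by
    intro N
    cases N with
    | zero =>
      rw [Finset.range_zero, Finset.sum_empty]
      exact le_of_lt (inv_pos.mpr hC)
    | succ N =>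
      have hmono : (∑ k ∈ range N, b k) ≤ ∑ k ∈ range (N+1), b k :=
        Finset.sum_le_sum_of_subset_of_nonneg
          (Finset.range_subset_range.mpr (Nat.le_succ N)) (fun k _ _ => hbnn k)
      have h1 := hstep N
      have h2 : (∑ k ∈ range (N+1), b k) ≤ 1 + U * ∑ k ∈ range (N+1), b k := by
        have := mul_le_mul_of_nonneg_left hmono hUnn
        linarith
      rw [← one_div, le_div_iff₀ hC]
      nlinarith
  exact summable_of_sum_range_le hbnn hbound

end Aux7

theorem rU_eq_inv_specRadius_of_rhoTransient {S : Type*} [Countable S] [Infinite S] (P : S → S → ℝ)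
    (hP : IsTransProb P) (hirr : Irred P)
    (htr : RhoTransient P) :
    ∀ x : S, rU P x x = ENNReal.ofReal (specRadius P)⁻¹ := by
  intro x
  open Finset Filter Topology in
  obtain ⟨hrE, hofReal⟩ := inv_specRadius_eq hP hirr x
  set c := convRadius fun n => kpow P n x x with hc
  rw [hofReal]
  have hc1 : (1:ℝ≥0∞) ≤ c := one_le_convRadius hP x x
  have hctop : c ≠ ⊤ := (convRadius_kpow_lt_top hP hirr x).ne
  set r : ℝ := (specRadius P)⁻¹ with hrdef
  have hrc : r = c.toReal := hrE
  have hr1 : (1:ℝ) ≤ r := by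
    rw [hrc]
    calc (1:ℝ) = (1:ℝ≥0∞).toReal := by simp
      _ ≤ c.toReal := ENNReal.toReal_mono hctop hc1
  have hr0 : (0:ℝ) ≤ r := by linarith
  have hG : Summable fun n => kpow P n x x * r ^ n :=
    summable_of_green_ne_top hP hr0 (htr x)
  refine le_antisymm ?_ ?_
  · -- rU ≤ c
    refine convRadius_le fun z hz => ?_
    by_contra hlt
    push_neg at hlt
    have hrz : r < (z : ℝ) := by
      rw [hrc]
      have := (ENNReal.toReal_lt_toReal hctop ENNReal.coe_ne_top).mpr hlt
      simpa using this
    have hU1 := U_lt_one hP x hr0 hG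
    set t : ℕ → ℝ := fun j => r + ((z:ℝ) - r)/(j+1) with htdef
    have h0 : Tendsto (fun j : ℕ => ((z:ℝ) - r) * (1/(j+1))) atTop
        (𝓝 (((z:ℝ) - r) * 0)) :=
      tendsto_const_nhds.mul tendsto_one_div_add_atTop_nhds_zero_nat
    have htt : Tendsto t atTop (𝓝 r) := by
      have := tendsto_const_nhds.add h0 (f := fun _ : ℕ => r)
      simp only [mul_zero, add_zero] at this
      refine this.congr fun j => ?_
      simp [htdef, div_eq_mul_inv]
    have htr' : ∀ j, r < t j := by
      intro j
      have hpos : 0 < ((z:ℝ) - r)/(j+1) := div_pos (by linarith) (by positivity)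
      simp only [htdef]
      linarith
    have htz : ∀ j, t j ≤ (z:ℝ) := by
      intro j
      have h1 : ((z:ℝ) - r)/(j+1) ≤ ((z:ℝ) - r) := by
        apply div_le_self (by linarith)
        have : (0:ℝ) ≤ (j:ℝ) := Nat.cast_nonneg j
        linarith
      simp only [htdef]
      linarith
    have ht0 : ∀ j, 0 ≤ t j := fun j => le_trans hr0 (htr' j).le
    have hdom : Tendsto (fun j => ∑' n, fret P n x x * (t j)^n) atTop
        (𝓝 (∑' n, fret P n x x * r^n)) := by
      apply tendsto_tsum_of_dominated_convergence
        (bound := fun n => fret P n x x * (z:ℝ)^n) hz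
      · exact fun n => ((htt.pow n).const_mul _)
      · refine Eventually.of_forall fun j n => ?_
        rw [Real.norm_eq_abs, abs_of_nonneg
          (mul_nonneg (fret_nonneg hP n x x) (pow_nonneg (ht0 j) n))]
        exact mul_le_mul_of_nonneg_left (pow_le_pow_left₀ (ht0 j) (htz j) n)
          (fret_nonneg hP n x x)
    obtain ⟨j, hj⟩ := (hdom.eventually_lt_const hU1).exists
    have hUt_sum : Summable fun n => fret P n x x * (t j)^n := by
      refine Summable.of_nonneg_of_le
        (fun n => mul_nonneg (fret_nonneg hP n x x) (pow_nonneg (ht0 j) n))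
        (fun n => ?_) hz
      exact mul_le_mul_of_nonneg_left (pow_le_pow_left₀ (ht0 j) (htz j) n)
        (fret_nonneg hP n x x)
    have hGt := summable_kpow_of_U_lt_one hP x (ht0 j) hUt_sum hj
    have hcoe : ((t j).toNNReal : ℝ) = t j := Real.coe_toNNReal _ (ht0 j)
    have hle : (((t j).toNNReal : ℝ≥0) : ℝ≥0∞) ≤ c := by
      refine le_convRadius ?_
      rw [show (fun n => kpow P n x x * ((t j).toNNReal : ℝ) ^ n)
            = fun n => kpow P n x x * (t j) ^ n from by rw [hcoe]]
      exact hGt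
    have hle2 : ENNReal.ofReal (t j) ≤ ENNReal.ofReal r := by
      calc ENNReal.ofReal (t j) = (((t j).toNNReal : ℝ≥0) : ℝ≥0∞) := rfl
        _ ≤ c := hle
        _ = ENNReal.ofReal r := by rw [← hofReal]
    have := (ENNReal.ofReal_le_ofReal_iff hr0).mp hle2
    linarith [htr' j]
  · -- c ≤ rU
    refine convRadius_le fun z hz => le_convRadius ?_
    refine Summable.of_nonneg_of_le
      (fun n => mul_nonneg (fret_nonneg hP n x x) (pow_nonneg z.coe_nonneg n))
      (fun n => ?_) hz
    exact mul_le_mul_of_nonneg_right (fret_le_kpow hP n x x) (pow_nonneg z.coe_nonneg n)
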